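/- arXiv:1506.06302 — 6 statements merged into one kernel-verified Lean document; each statement's English description precedes it below -/
import Mathlib

section
/- Let H be a 2-vertex-connected graph on k vertices. For any partition of the edge set E_H into p ≥ 2 nonempty groups I_1, ..., I_p, letting I'_i denote the set of vertices incident to edges in I_i, we have Σ_{i=1}^p |I'_i| ≥ k + p. -/
/-! By induction on `p`. For two parts, their endpoint sets cover `V` and share at least two
vertices: if they shared at most `v`, no edge of `H - v` would join the endpoints of the first
part to the rest of `H - v`. For more parts, connectivity of `H` yields two parts with a common
endpoint, and merging them lowers `p` by one and the sum by at least one. -/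

/-- A graph is 2-vertex-connected: it has at least 3 vertices and removing any
single vertex leaves it connected. -/
def TwoConnected {V : Type*} (G : SimpleGraph V) : Prop :=
  3 ≤ Nat.card V ∧ ∀ v : V, (G.induce ({v}ᶜ : Set V)).Connected

open Finset

section

variable {V : Type*}

def edgeEndpoints (S : Set (Sym2 V)) : Set V := {v | ∃ e ∈ S, v ∈ e}

lemma mem_edgeEndpoints_left {S : Set (Sym2 V)} {u w : V} (h : s(u, w) ∈ S) :
    u ∈ edgeEndpoints S :=
  ⟨_, h, Sym2.mem_mk_left u w⟩

lemma mem_edgeEndpoints_right {S : Set (Sym2 V)} {u w : V} (h : s(u, w) ∈ S) :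
    w ∈ edgeEndpoints S :=
  ⟨_, h, Sym2.mem_mk_right u w⟩

lemma Set.Nonempty.edgeEndpoints {S : Set (Sym2 V)} (hS : S.Nonempty) :
    (edgeEndpoints S).Nonempty :=
  ⟨_, _, hS.some_mem, Sym2.out_fst_mem _⟩

lemma edgeEndpoints_union (S T : Set (Sym2 V)) :
    edgeEndpoints (S ∪ T) = edgeEndpoints S ∪ edgeEndpoints T := by
  ext v
  simp only [edgeEndpoints, Set.mem_union, Set.mem_ofPred_eq, or_and_right, exists_or]

lemma Finset.sum_erase_update_add_add {ι α M : Type*} [DecidableEq ι] [AddCommMonoid M]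
    {s : Finset ι} {i j : ι} (hi : i ∈ s) (hj : j ∈ s) (hij : i ≠ j) (g : α → M) (f : ι → α)
    (b : α) :
    ∑ x ∈ s.erase j, g (Function.update f i b x) + (g (f i) + g (f j)) =
      ∑ x ∈ s, g (f x) + g b := by
  have hi' : i ∈ s.erase j := mem_erase.mpr ⟨hij, hi⟩
  have hupdate (x : ι) : g (Function.update f i b x) = Function.update (g ∘ f) i (g b) x :=
    congrFun (Function.comp_update g f i b) x
  simp only [hupdate]
  rw [sum_update_of_mem hi', sdiff_singleton_eq_erase, ← add_sum_erase s _ hj,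
    ← add_sum_erase _ _ hi']
  simp only [Function.comp_apply]
  abel

lemma Set.biUnion_erase_update_union {ι α : Type*} [DecidableEq ι] {s : Finset ι} {i j : ι}
    (hi : i ∈ s) (hj : j ∈ s) (hij : i ≠ j) (I : ι → Set α) :
    ⋃ x ∈ s.erase j, Function.update I i (I i ∪ I j) x = ⋃ x ∈ s, I x := by
  ext a
  simp only [Set.mem_iUnion, mem_erase, exists_prop]
  constructor
  · rintro ⟨x, ⟨hxj, hx⟩, ha⟩
    rcases eq_or_ne x i with rfl | hxi
    · rw [Function.update_self] at ha
      exact ha.elim (⟨x, hx, ·⟩) (⟨j, hj, ·⟩)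
    · exact ⟨x, hx, by rwa [Function.update_of_ne hxi] at ha⟩
  · rintro ⟨x, hx, ha⟩
    by_cases hxij : x = i ∨ x = j
    · refine ⟨i, ⟨hij, hi⟩, ?_⟩
      rw [Function.update_self]
      rcases hxij with rfl | rfl
      exacts [Or.inl ha, Or.inr ha]
    · push Not at hxij
      exact ⟨x, ⟨hxij.2, hx⟩, by rwa [Function.update_of_ne hxij.1]⟩

namespace SimpleGraph

lemma Preconnected.exists_adj_mem_notMem {G : SimpleGraph V} (hG : G.Preconnected) {S : Set V}
    {a b : V} (ha : a ∈ S) (hb : b ∉ S) : ∃ u w, G.Adj u w ∧ u ∈ S ∧ w ∉ S := by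
  obtain ⟨p⟩ := hG a b
  obtain ⟨d, -, hd₁, hd₂⟩ := p.exists_boundary_dart S ha hb
  exact ⟨_, _, d.adj, hd₁, hd₂⟩

lemma Preconnected.exists_ne_edgeEndpoints_inter_nonempty {G : SimpleGraph V}
    (hG : G.Preconnected) {ι : Type*} {s : Finset ι} {I : ι → Set (Sym2 V)}
    (hcover : G.edgeSet ⊆ ⋃ m ∈ s, I m) {i j : ι} (hj : j ∈ s) (hji : j ≠ i)
    (hIi : (I i).Nonempty) (hIj : (I j).Nonempty) :
    ∃ m ∈ s, m ≠ i ∧ (edgeEndpoints (I i) ∩ edgeEndpoints (I m)).Nonempty := by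
  obtain ⟨a, ha⟩ := hIi.edgeEndpoints
  obtain ⟨b, hb⟩ := hIj.edgeEndpoints
  by_cases hbi : b ∈ edgeEndpoints (I i)
  · exact ⟨j, hj, hji, b, hbi, hb⟩
  obtain ⟨u, w, huw, hu, hw⟩ := hG.exists_adj_mem_notMem ha hbi
  obtain ⟨m, hm, he⟩ : ∃ m ∈ s, s(u, w) ∈ I m := by simpa using hcover huw
  refine ⟨m, hm, ?_, u, hu, mem_edgeEndpoints_left he⟩
  rintro rfl
  exact hw (mem_edgeEndpoints_right he)

lemma exists_mem_edgeEndpoints_ne {G : SimpleGraph V} {S : Set (Sym2 V)} (hSG : S ⊆ G.edgeSet)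
    (hS : S.Nonempty) (v : V) : ∃ x ∈ edgeEndpoints S, x ≠ v := by
  obtain ⟨e, he⟩ := hS
  induction e using Sym2.ind with
  | _ x y =>
    rcases eq_or_ne x v with rfl | hxv
    · exact ⟨y, mem_edgeEndpoints_right he, (G.ne_of_adj (hSG he)).symm⟩
    · exact ⟨x, mem_edgeEndpoints_left he, hxv⟩

end SimpleGraph

namespace TwoConnected

open SimpleGraph

variable {H : SimpleGraph V}

lemma finite (hH : TwoConnected H) : Finite V :=
  Nat.finite_of_card_ne_zero (by have := hH.1; omega)

lemma exists_ne_ne (hH : TwoConnected H) (x y : V) : ∃ z, z ≠ x ∧ z ≠ y := by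
  have := hH.finite
  exact ENat.exists_ne_ne_of_three_le (by simpa [ENat.card_eq_coe_natCard] using hH.1) x y

lemma nontrivial (hH : TwoConnected H) : Nontrivial V := by
  have := hH.finite
  exact Finite.one_lt_card_iff_nontrivial.mp (by have := hH.1; omega)

lemma connected (hH : TwoConnected H) : H.Connected := by
  have := hH.nontrivial
  refine ⟨fun u v ↦ ?_⟩
  obtain ⟨w, hwu, hwv⟩ := hH.exists_ne_ne u v
  have huv := (hH.2 w).preconnected ⟨u, hwu.symm⟩ ⟨v, hwv.symm⟩
  exact huv.map (Embedding.induce _).toHom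

lemma edgeEndpoints_edgeSet (hH : TwoConnected H) : edgeEndpoints H.edgeSet = Set.univ := by
  have := hH.nontrivial
  refine Set.eq_univ_of_forall fun v ↦ ?_
  obtain ⟨w, hvw⟩ := hH.connected.preconnected.exists_adj_of_nontrivial v
  exact mem_edgeEndpoints_left (H.mem_edgeSet.mpr hvw)

lemma exists_mem_edgeEndpoints_inter_ne (hH : TwoConnected H) {S T : Set (Sym2 V)}
    (hS : S.Nonempty) (hT : T.Nonempty) (hST : S ∪ T = H.edgeSet) (v : V) :
    ∃ u ∈ edgeEndpoints S ∩ edgeEndpoints T, u ≠ v := by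
  by_contra! h
  obtain ⟨x, hxS, hxv⟩ := exists_mem_edgeEndpoints_ne (hST ▸ Set.subset_union_left) hS v
  obtain ⟨y, hyT, hyv⟩ := exists_mem_edgeEndpoints_ne (hST ▸ Set.subset_union_right) hT v
  have hyS : y ∉ edgeEndpoints S := fun hyS ↦ hyv (h y ⟨hyS, hyT⟩)
  obtain ⟨u, w, huw, hu, hw⟩ := (hH.2 v).preconnected.exists_adj_mem_notMem
    (S := {z | (z : V) ∈ edgeEndpoints S}) (a := ⟨x, hxv⟩) (b := ⟨y, hyv⟩) hxS hyS
  have he : s((u : V), w) ∈ S ∪ T := hST ▸ huw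
  rcases he with he | he
  · exact hw (mem_edgeEndpoints_right he)
  · exact u.2 (h u ⟨hu, mem_edgeEndpoints_left he⟩)

lemma two_le_ncard_edgeEndpoints_inter (hH : TwoConnected H) {S T : Set (Sym2 V)}
    (hS : S.Nonempty) (hT : T.Nonempty) (hST : S ∪ T = H.edgeSet) :
    2 ≤ (edgeEndpoints S ∩ edgeEndpoints T).ncard := by
  have := hH.finite
  have := hH.nontrivial
  obtain ⟨u, hu, -⟩ := hH.exists_mem_edgeEndpoints_inter_ne hS hT hST (Classical.arbitrary V)
  obtain ⟨w, hw, hwu⟩ := hH.exists_mem_edgeEndpoints_inter_ne hS hT hST u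
  exact (Set.one_lt_ncard_iff).mpr ⟨w, u, hw, hu, hwu⟩

lemma card_add_two_le_ncard_edgeEndpoints_add (hH : TwoConnected H) {S T : Set (Sym2 V)}
    (hS : S.Nonempty) (hT : T.Nonempty) (hST : S ∪ T = H.edgeSet) :
    Nat.card V + 2 ≤ (edgeEndpoints S).ncard + (edgeEndpoints T).ncard := by
  have := hH.finite
  have hunion := Set.ncard_union_add_ncard_inter (edgeEndpoints S) (edgeEndpoints T)
  rw [← edgeEndpoints_union, hST, hH.edgeEndpoints_edgeSet, Set.ncard_univ] at hunion
  have hinter := hH.two_le_ncard_edgeEndpoints_inter hS hT hST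
  omega

theorem card_add_card_le_sum_ncard_edgeEndpoints (hH : TwoConnected H) {ι : Type*}
    [DecidableEq ι] {s : Finset ι} (hs : 2 ≤ #s) {I : ι → Set (Sym2 V)}
    (hne : ∀ i ∈ s, (I i).Nonempty) (hcover : ⋃ i ∈ s, I i = H.edgeSet) :
    Nat.card V + #s ≤ ∑ i ∈ s, (edgeEndpoints (I i)).ncard := by
  have := hH.finite
  induction s using Finset.strongInduction generalizing I with
  | H s ih =>
  rcases hs.eq_or_lt with hs2 | hs3
  · obtain ⟨a, b, hab, rfl⟩ := card_eq_two.mp hs2.symm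
    rw [sum_pair hab, card_pair hab]
    exact hH.card_add_two_le_ncard_edgeEndpoints_add (hne a (by simp)) (hne b (by simp))
      (by simpa using hcover)
  · obtain ⟨i, hi, j, hj, hij⟩ := one_lt_card.mp (by omega : 1 < #s)
    obtain ⟨m, hm, hmi, hshared⟩ := hH.connected.preconnected.exists_ne_edgeEndpoints_inter_nonempty
      hcover.ge hj (Ne.symm hij) (hne i hi) (hne j hj)
    have hJne : ∀ x ∈ s.erase m, (Function.update I i (I i ∪ I m) x).Nonempty := by
      intro x hx
      rcases eq_or_ne x i with rfl | hxi
      · simpa using (hne x hi).inl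
      · simpa [hxi] using hne x (mem_of_mem_erase hx)
    have hJcover : ⋃ x ∈ s.erase m, Function.update I i (I i ∪ I m) x = H.edgeSet := by
      rw [Set.biUnion_erase_update_union hi hm hmi.symm, hcover]
    have hmerged := ih (s.erase m) (erase_ssubset hm) (by rw [card_erase_of_mem hm]; omega)
      hJne hJcover
    have hsum := sum_erase_update_add_add hi hm hmi.symm (fun S ↦ (edgeEndpoints S).ncard) I
      (I i ∪ I m)
    have hlt : (edgeEndpoints (I i ∪ I m)).ncard <
        (edgeEndpoints (I i)).ncard + (edgeEndpoints (I m)).ncard := by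
      rw [edgeEndpoints_union]
      exact Set.ncard_union_lt (h := Set.not_disjoint_iff_nonempty_inter.mpr hshared)
    rw [card_erase_of_mem hm] at hmerged
    omega

end TwoConnected

end

theorem stmt_0_general {V : Type*} [Fintype V] (k : ℕ) (hk : Fintype.card V = k)
    (H : SimpleGraph V) (hH : TwoConnected H)
    (p : ℕ) (hp : 2 ≤ p) (I : Fin p → Set (Sym2 V))
    (hne : ∀ i, (I i).Nonempty)
    (hcover : (⋃ i, I i) = H.edgeSet) :
    k + p ≤ ∑ i : Fin p, ({v : V | ∃ e ∈ I i, v ∈ e}).ncard := by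
  have := hH.card_add_card_le_sum_ncard_edgeEndpoints (s := univ) (by simpa using hp)
    (fun i _ ↦ hne i) (by simpa using hcover)
  rwa [Nat.card_eq_fintype_card, hk, card_univ, Fintype.card_fin] at this

theorem stmt_0 {V : Type*} [Fintype V] (k : ℕ) (hk : Fintype.card V = k)
    (H : SimpleGraph V) (hH : TwoConnected H)
    (p : ℕ) (hp : 2 ≤ p) (I : Fin p → Set (Sym2 V))
    (hsub : ∀ i, I i ⊆ H.edgeSet)
    (hne : ∀ i, (I i).Nonempty)
    (hdisj : ∀ i j, i ≠ j → Disjoint (I i) (I j))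
    (hcover : (⋃ i, I i) = H.edgeSet) :
    k + p ≤ ∑ i : Fin p, ({v : V | ∃ e ∈ I i, v ∈ e}).ncard :=
  stmt_0_general k hk H hH p hp I hne hcover
end

section
/- Let H be 2-vertex-connected and let I_1,...,I_p (p ≥ 2) partition E_H into nonempty groups, with I'_i the vertex sets incident to I_i. If t vertices of H lie in at least two of the sets I'_i (boundary vertices), then each I'_i contains at least 2 boundary vertices. -/
namespace SimpleGraph

variable {V : Type*} {H : SimpleGraph V}

lemma exists_mem_ne_of_mem_edgeSet {e : Sym2 V} (he : e ∈ H.edgeSet) (v : V) :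
    ∃ a ∈ e, a ≠ v := by
  induction e using Sym2.ind with
  | _ x y =>
    by_cases hx : x = v
    · exact ⟨y, Sym2.mem_mk_right _ _, hx ▸ (H.mem_edgeSet.mp he).ne.symm⟩
    · exact ⟨x, Sym2.mem_mk_left _ _, hx⟩

lemma Walk.exists_mem_support_incident_both {S T : Set (Sym2 V)}
    (hcover : H.edgeSet ⊆ S ∪ T) {a c : V} (W : H.Walk a c)
    (ha : ∃ e ∈ S, a ∈ e) (hc : ∃ e ∈ T, c ∈ e) :
    ∃ w ∈ W.support, (∃ e ∈ S, w ∈ e) ∧ ∃ e ∈ T, w ∈ e := by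
  induction W with
  | nil => exact ⟨_, Walk.start_mem_support _, ha, hc⟩
  | @cons a b c hab W ih =>
    rcases hcover (H.mem_edgeSet.mpr hab) with hS | hT
    · obtain ⟨w, hw, hwST⟩ := ih ⟨_, hS, Sym2.mem_mk_right _ _⟩ hc
      exact ⟨w, List.mem_cons_of_mem _ hw, hwST⟩
    · exact ⟨a, Walk.start_mem_support _, ha, _, hT, Sym2.mem_mk_left _ _⟩

lemma _root_.TwoConnected.exists_ne_incident_both (hH : TwoConnected H) {S T : Set (Sym2 V)}
    (hS : (S ∩ H.edgeSet).Nonempty) (hT : (T ∩ H.edgeSet).Nonempty)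
    (hcover : H.edgeSet ⊆ S ∪ T) (v : V) :
    ∃ w, w ≠ v ∧ (∃ e ∈ S, w ∈ e) ∧ ∃ e ∈ T, w ∈ e := by
  obtain ⟨eS, heS, heSH⟩ := hS
  obtain ⟨eT, heT, heTH⟩ := hT
  obtain ⟨a, haeS, hav⟩ := exists_mem_ne_of_mem_edgeSet heSH v
  obtain ⟨c, hceT, hcv⟩ := exists_mem_ne_of_mem_edgeSet heTH v
  obtain ⟨W⟩ := hH.2 v ⟨a, hav⟩ ⟨c, hcv⟩
  obtain ⟨w, hw, hwS, hwT⟩ := (W.map (Embedding.induce _).toHom).exists_mem_support_incident_both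
    hcover ⟨eS, heS, haeS⟩ ⟨eT, heT, hceT⟩
  rw [Walk.support_map, List.mem_map] at hw
  obtain ⟨u, -, rfl⟩ := hw
  exact ⟨u, u.2, hwS, hwT⟩

lemma _root_.TwoConnected.exists_ne_boundary (hH : TwoConnected H) {ι : Type*}
    {I : ι → Set (Sym2 V)} (hcover : ⋃ k, I k = H.edgeSet) {i j : ι} (hji : j ≠ i)
    (hi : (I i ∩ H.edgeSet).Nonempty) (hj : (I j ∩ H.edgeSet).Nonempty) (v : V) :
    ∃ w, w ≠ v ∧ (∃ e ∈ I i, w ∈ e) ∧ ∃ k, k ≠ i ∧ ∃ e ∈ I k, w ∈ e := by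
  have hT : ((⋃ (k) (_ : k ≠ i), I k) ∩ H.edgeSet).Nonempty :=
    hj.mono (Set.inter_subset_inter_left _ (Set.subset_biUnion_of_mem hji))
  have hsplit : H.edgeSet ⊆ I i ∪ ⋃ (k) (_ : k ≠ i), I k := by
    rw [← hcover]
    rintro e ⟨_, ⟨k, rfl⟩, hek⟩
    by_cases hki : k = i
    · exact Or.inl (hki ▸ hek)
    · exact Or.inr (Set.mem_biUnion hki hek)
  obtain ⟨w, hwv, hwi, e, he, hwe⟩ := hH.exists_ne_incident_both hi hT hsplit v
  obtain ⟨k, hki, hek⟩ := Set.mem_iUnion₂.mp he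
  exact ⟨w, hwv, hwi, k, hki, e, hek, hwe⟩

end SimpleGraph

theorem stmt_1_general {V : Type*} [Fintype V] (H : SimpleGraph V) (hH : TwoConnected H)
    (p : ℕ) (hp : 2 ≤ p) (I : Fin p → Set (Sym2 V))
    (hsub : ∀ i, I i ⊆ H.edgeSet)
    (hne : ∀ i, (I i).Nonempty)
    (hcover : (⋃ i, I i) = H.edgeSet) :
    ∀ i : Fin p,
      2 ≤ ({v : V | (∃ e ∈ I i, v ∈ e) ∧ ∃ j : Fin p, j ≠ i ∧ ∃ e ∈ I j, v ∈ e}).ncard := by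
  intro i
  have : Nontrivial (Fin p) := Fin.nontrivial_iff_two_le.mpr hp
  obtain ⟨j, hji⟩ := exists_ne i
  have hnonempty (k : Fin p) : (I k ∩ H.edgeSet).Nonempty :=
    (hne k).mono fun e he => ⟨he, hsub k he⟩
  have hboundary := hH.exists_ne_boundary hcover hji (hnonempty i) (hnonempty j)
  obtain ⟨e, -⟩ := hne i
  obtain ⟨w₁, -, hw₁⟩ := hboundary e.out.1
  obtain ⟨w₂, hw₂₁, hw₂⟩ := hboundary w₁
  exact (Set.one_lt_ncard_iff).mpr ⟨w₂, w₁, hw₂, hw₁, hw₂₁⟩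

theorem stmt_1 {V : Type*} [Fintype V] (H : SimpleGraph V) (hH : TwoConnected H)
    (p : ℕ) (hp : 2 ≤ p) (I : Fin p → Set (Sym2 V))
    (hsub : ∀ i, I i ⊆ H.edgeSet)
    (hne : ∀ i, (I i).Nonempty)
    (hdisj : ∀ i j, i ≠ j → Disjoint (I i) (I j))
    (hcover : (⋃ i, I i) = H.edgeSet)
    (t : ℕ)
    (ht : t = ({v : V | ∃ i j : Fin p, i ≠ j ∧ (∃ e ∈ I i, v ∈ e) ∧
      (∃ e ∈ I j, v ∈ e)}).ncard) :
    ∀ i : Fin p,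
      2 ≤ ({v : V | (∃ e ∈ I i, v ∈ e) ∧ ∃ j : Fin p, j ≠ i ∧ ∃ e ∈ I j, v ∈ e}).ncard :=
  stmt_1_general H hH p hp I hsub hne hcover
end

section
/- Let M be a graph with maximum degree at most k and girth strictly greater than k, and let G be the line graph of M. Then every set T of k vertices of G inducing a 2-connected subgraph of G is contained in a single star Star(v) = { e ∈ E_M : v ∈ e } for some vertex v of M. -/
/-- The line graph of `M`: vertices are the edges of `M`, two distinct edges
are adjacent iff they share an endpoint. -/
def lineGraph {V : Type*} (M : SimpleGraph V) : SimpleGraph M.edgeSet where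
  Adj e f := e ≠ f ∧ ∃ v : V, v ∈ (e : Sym2 V) ∧ v ∈ (f : Sym2 V)
  symm := ⟨fun e f h => ⟨h.1.symm, h.2.imp fun v hv => ⟨hv.2, hv.1⟩⟩⟩
  loopless := ⟨fun e h => h.1 rfl⟩

lemma aux_edge_eq {V : Type*} {u v : V} {z : Sym2 V} (h : u ≠ v) (hu : u ∈ z) (hv : v ∈ z) :
    z = s(u, v) := (Sym2.mem_and_mem_iff h).mp ⟨hu, hv⟩

/-- Walks in the line graph induced on `T` minus a vertex `e` yield reachability in `H'`,
provided each single edge of `T` other than `e` yields reachability of its endpoints. -/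
lemma walk_reach {V : Type*} {M : SimpleGraph V} {T : Set M.edgeSet} (e : ↥T)
    {H' : SimpleGraph V}
    (hedge : ∀ f : ↥T, f ≠ e → ∀ u v : V,
      u ∈ ((f : M.edgeSet) : Sym2 V) → v ∈ ((f : M.edgeSet) : Sym2 V) → H'.Reachable u v)
    {x y : ↥({e}ᶜ : Set ↥T)}
    (w : (((lineGraph M).induce T).induce ({e}ᶜ : Set ↥T)).Walk x y) :
    ∀ u v : V, u ∈ (((x : ↥T) : M.edgeSet) : Sym2 V) →
      v ∈ (((y : ↥T) : M.edgeSet) : Sym2 V) → H'.Reachable u v := by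
  induction w with
  | nil =>
    rename_i a
    exact fun u v hu hv => hedge a a.prop u v hu hv
  | cons h p ih =>
    rename_i a b c
    intro u v hu hv
    obtain ⟨hne, d, hd1, hd2⟩ := h
    exact (hedge a a.prop u d hu hd1).trans (ih d v hd2 hv)

theorem stmt_3 {V : Type*} (k : ℕ) (M : SimpleGraph V)
    (hdeg : ∀ v : V, (M.neighborSet v).ncard ≤ k)
    (hgirth : (k : ℕ∞) < M.girth)
    (T : Set M.edgeSet) (hT : T.ncard = k)
    (h2conn : TwoConnected ((lineGraph M).induce T)) :
    ∃ v : V, ∀ e ∈ T, v ∈ (e : Sym2 V) := by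
  classical
  obtain ⟨hcard, hdel⟩ := h2conn
  rw [Nat.card_coe_set_eq, hT] at hcard
  -- T is finite
  have hTfin : T.Finite := by
    by_contra h
    have := Set.Infinite.ncard h
    omega
  -- the subgraph of M with edge set T
  set H : SimpleGraph V := SimpleGraph.fromEdgeSet (Subtype.val '' T) with hH
  have hHM : H ≤ M := by
    intro u v huv
    rw [SimpleGraph.fromEdgeSet_adj] at huv
    obtain ⟨⟨e, heT, he⟩, hne⟩ := huv
    rw [← SimpleGraph.mem_edgeSet, ← he]
    exact e.prop
  -- H is acyclic
  have hacyc : H.IsAcyclic := by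
    intro v w hw
    have hw' : (w.mapLe hHM).IsCycle := hw.mapLe _
    have hlen : w.length ≤ k := by
      have hnd : w.edges.Nodup := hw.edges_nodup
      have hsub : ∀ e ∈ w.edges, e ∈ Subtype.val '' T := by
        intro e he
        have := w.edges_subset_edgeSet he
        rw [hH, SimpleGraph.edgeSet_fromEdgeSet] at this
        exact this.1
      have h1 : w.edges.toFinset.card = w.edges.length := List.toFinset_card_of_nodup hnd
      have h2 : w.edges.toFinset ⊆ (hTfin.image Subtype.val).toFinset := by
        intro e he
        rw [Set.Finite.mem_toFinset]
        exact hsub e (List.mem_toFinset.mp he)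
      have h3 : (hTfin.image Subtype.val).toFinset.card = k := by
        rw [← Set.ncard_eq_toFinset_card _ (hTfin.image Subtype.val),
        Set.ncard_image_of_injective _ Subtype.val_injective, hT]
      have := Finset.card_le_card h2
      rw [h1, h3] at this
      rw [← SimpleGraph.Walk.length_edges]
      omega
    have hegirth : M.egirth ≤ (k : ℕ∞) := by
      have := SimpleGraph.le_egirth.mp (le_refl M.egirth) _ _ hw'
      rw [SimpleGraph.Walk.length_map] at this
      exact this.trans (by exact_mod_cast hlen)
    have : M.girth ≤ k := by
      rw [SimpleGraph.girth]
      exact ENat.toNat_le_of_le_coe hegirth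
    have hk : k < M.girth := by exact_mod_cast hgirth
    omega
  -- the line graph induced on T is connected
  have hconn : ((lineGraph M).induce T).Connected := by
    have hne : Nonempty ↥T := by
      rcases Set.nonempty_of_ncard_ne_zero (by omega : T.ncard ≠ 0) with ⟨x, hx⟩
      exact ⟨⟨x, hx⟩⟩
    refine SimpleGraph.Connected.mk ?_
    intro x y
    have hfin : Finite ↥T := hTfin.to_subtype
    have : ∃ z : ↥T, z ≠ x ∧ z ≠ y := by
      by_contra h
      push_neg at h
      have : (Set.univ : Set ↥T).ncard ≤ ({x, y} : Set ↥T).ncard := by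
        apply Set.ncard_le_ncard
        · intro z _
          rcases eq_or_ne z x with h1 | h1
          · exact Or.inl h1
          · exact Or.inr (h z h1)
        · exact (Set.finite_singleton y).insert x
      have h1 : ({x, y} : Set ↥T).ncard ≤ 2 := by
        apply le_trans (Set.ncard_insert_le x {y})
        simp
      have h2 : (Set.univ : Set ↥T).ncard = T.ncard := by
        rw [Set.ncard_univ, Nat.card_coe_set_eq]
      omega
    obtain ⟨z, hzx, hzy⟩ := this
    have hx : x ∈ ({z}ᶜ : Set ↥T) := hzx.symm
    have hy : y ∈ ({z}ᶜ : Set ↥T) := hzy.symm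
    have hr := (hdel z).preconnected ⟨x, hx⟩ ⟨y, hy⟩
    let ι : (((lineGraph M).induce T).induce ({z}ᶜ : Set ↥T)) →g ((lineGraph M).induce T) :=
      ⟨Subtype.val, fun {a b} h => h⟩
    exact hr.map ι
  -- main case distinction
  -- get two adjacent edges sharing a vertex c
  have ⟨x, y, hxy⟩ : ∃ x y : ↥T, x ≠ y := by
    obtain ⟨x0, hx0⟩ := hconn.nonempty
    by_contra h
    push_neg at h
    have hsub : T ⊆ {(x0 : M.edgeSet)} := fun z hz => by
      have := h ⟨z, hz⟩ ⟨x0, hx0⟩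
      simpa using congrArg Subtype.val this
    have := Set.ncard_le_ncard hsub (Set.finite_singleton _)
    simp [Set.ncard_singleton] at this
    omega
  obtain ⟨w⟩ := hconn.preconnected x y
  -- extract an adjacent pair of edges sharing a vertex c
  have hadj : ∃ e₁ e₂ : ↥T, (lineGraph M).Adj e₁.val e₂.val := by
    cases w with
    | nil => exact absurd rfl hxy
    | cons h p => exact ⟨_, _, h⟩
  obtain ⟨e₁, e₂, hne12, c, hc1, hc2⟩ := hadj
  -- if every edge of T contains c, we are done
  by_cases hstar : ∀ e ∈ T, c ∈ (e : Sym2 V)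
  · exact ⟨c, hstar⟩
  push_neg at hstar
  obtain ⟨h0, h0T, hch0⟩ := hstar
  -- find an adjacent pair p q with c ∈ p, c ∉ q
  have find : ∀ {a b : ↥T} (w : ((lineGraph M).induce T).Walk a b),
      c ∈ ((a : M.edgeSet) : Sym2 V) → c ∉ ((b : M.edgeSet) : Sym2 V) →
      ∃ p q : ↥T, (lineGraph M).Adj p.val q.val ∧ c ∈ ((p : M.edgeSet) : Sym2 V) ∧
        c ∉ ((q : M.edgeSet) : Sym2 V) := by
    intro a b w
    induction w with
    | nil => intro h1 h2; exact absurd h1 h2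
    | cons h p ih =>
      rename_i a' b' c'
      intro h1 h2
      by_cases hm : c ∈ ((b' : M.edgeSet) : Sym2 V)
      · exact ih hm h2
      · exact ⟨a', b', h, h1, hm⟩
  obtain ⟨w2⟩ := hconn.preconnected e₁ ⟨h0, h0T⟩
  obtain ⟨p, q, ⟨hpqne, d, hdp, hdq⟩, hcp, hcq⟩ := find w2 hc1 hch0
  have hdc : d ≠ c := fun h => hcq (h ▸ hdq)
  have hpcd : ((p : M.edgeSet) : Sym2 V) = s(c, d) := aux_edge_eq (Ne.symm hdc) hcp hdp
  -- an edge f ≠ p containing c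
  obtain ⟨f, hfp, hcf⟩ : ∃ f : ↥T, f ≠ p ∧ c ∈ ((f : M.edgeSet) : Sym2 V) := by
    rcases eq_or_ne e₁ p with h1 | h1
    · refine ⟨e₂, fun h => hne12 ?_, hc2⟩
      rw [h1, h]
    · exact ⟨e₁, h1, hc1⟩
  have hqp : q ≠ p := fun h => hcq (h ▸ hcp)
  -- the graph H minus the edge s(c,d)
  set H' : SimpleGraph V := H \ SimpleGraph.fromEdgeSet {s(c, d)} with hH'
  have hedge : ∀ g : ↥T, g ≠ p → ∀ u v : V, u ∈ ((g : M.edgeSet) : Sym2 V) →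
      v ∈ ((g : M.edgeSet) : Sym2 V) → H'.Reachable u v := by
    intro g hgp u v hu hv
    rcases eq_or_ne u v with h | h
    · exact h ▸ SimpleGraph.Reachable.refl u
    · apply SimpleGraph.Adj.reachable
      have hgval : ((g : M.edgeSet) : Sym2 V) = s(u, v) := aux_edge_eq h hu hv
      rw [hH', SimpleGraph.sdiff_adj]
      constructor
      · rw [hH, SimpleGraph.fromEdgeSet_adj]
        exact ⟨⟨g.val, g.prop, hgval⟩, h⟩
      · rw [SimpleGraph.fromEdgeSet_adj]
        rintro ⟨hmem, -⟩
        rw [Set.mem_singleton_iff] at hmem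
        apply hgp
        apply Subtype.val_injective
        apply Subtype.val_injective
        rw [hgval, hmem, hpcd]
  -- walk in the line graph minus p, from f to q
  have hfp' : f ∈ ({p}ᶜ : Set ↥T) := hfp
  have hqp' : q ∈ ({p}ᶜ : Set ↥T) := hqp
  obtain ⟨w3⟩ := (hdel p).preconnected ⟨f, hfp'⟩ ⟨q, hqp'⟩
  have hreach : H'.Reachable c d := walk_reach p hedge w3 c d hcf hdq
  -- but s(c,d) is a bridge of the acyclic graph H
  have hHadj : H.Adj c d := by
    rw [hH, SimpleGraph.fromEdgeSet_adj]
    exact ⟨⟨p.val, p.prop, hpcd⟩, Ne.symm hdc⟩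
  have hbridge := SimpleGraph.isAcyclic_iff_forall_adj_isBridge.mp hacyc hHadj
  rw [SimpleGraph.isBridge_iff] at hbridge
  exact absurd hreach hbridge
end

section
/- Define the labeling gadget L on vertex set [B]^k where for each color i ∈ [k] there is a directed edge of color i from (x_1,...,x_i, y_{(i+1)},...,x_k) to (x_1,...,y_i, x_{(i+1)},...,x_k) whenever y_i > x_i and y_{(i+1)} > x_{(i+1)} (indices mod k, other coordinates equal). Then every directed cycle in L uses at least one edge of each color. -/
/-- Cyclic successor on `Fin n`. -/
def fnext {n : ℕ} (j : Fin n) : Fin n :=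
  ⟨(j.val + 1) % n, Nat.mod_lt _ (Nat.lt_of_le_of_lt (Nat.zero_le _) j.isLt)⟩

/-- The labeling-gadget digraph on `[B]^k`: an edge of color `i` from `a` to `b`
strictly increases coordinate `i`, strictly decreases coordinate `i+1` (mod `k`),
and fixes every other coordinate. -/
def gadgetAdj (B k : ℕ) (i : Fin k) (a b : Fin k → Fin B) : Prop :=
  a i < b i ∧ b (fnext i) < a (fnext i) ∧
    ∀ j : Fin k, j ≠ i → j ≠ fnext i → a j = b j

/-!
If color `p + 1` is missing from a cycle, then coordinate `p + 1` never increases along it, so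
(the cycle being closed) it never changes either; but an edge of color `p` strictly decreases it.
Hence the set of colors used is closed under the cyclic successor, and a nonempty such set is
everything.
-/

lemma fnext_eq_add_one {m : ℕ} (j : Fin (m + 1)) : fnext j = j + 1 := by
  ext
  simp [fnext, Fin.val_add]

lemma fnext_bijective {n : ℕ} : Function.Bijective (fnext : Fin n → Fin n) := by
  cases n with
  | zero => exact ⟨fun j => j.elim0, fun j => j.elim0⟩
  | succ m =>
    have hinj : Function.Injective (fnext : Fin (m + 1) → Fin (m + 1)) := by
      intro a b h
      simpa [fnext_eq_add_one] using h
    exact ⟨hinj, Finite.surjective_of_injective hinj⟩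

open Fin.NatCast in
lemma fnext_iterate_eq_add {m : ℕ} (j : Fin (m + 1)) (t : ℕ) :
    fnext^[t] j = j + (t : Fin (m + 1)) := by
  induction t with
  | zero => simp
  | succ t ih => rw [Function.iterate_succ_apply', ih, fnext_eq_add_one, Nat.cast_succ, add_assoc]

open Fin.NatCast in
lemma eq_univ_of_fnext_mem {k : ℕ} {S : Set (Fin k)} {p : Fin k} (hp : p ∈ S)
    (hS : ∀ q ∈ S, fnext q ∈ S) : S = Set.univ := by
  cases k with
  | zero => exact p.elim0
  | succ m =>
    refine Set.eq_univ_of_forall fun q => ?_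
    have hiter (t : ℕ) : fnext^[t] p ∈ S := by
      induction t with
      | zero => exact hp
      | succ t ih => rw [Function.iterate_succ_apply']; exact hS _ ih
    simpa [fnext_iterate_eq_add] using hiter (q - p).val

/-- The sums of `f ∘ fnext` and `f` agree, so no step can be strict. -/
lemma apply_fnext_eq_of_apply_fnext_le {n : ℕ} {M : Type*} [AddCommMonoid M] [PartialOrder M]
    [IsOrderedCancelAddMonoid M] {f : Fin n → M} (h : ∀ j, f (fnext j) ≤ f j) (j : Fin n) :
    f (fnext j) = f j := by
  by_contra hne
  have hlt : ∑ i, f (fnext i) < ∑ i, f i :=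
    Finset.sum_lt_sum (fun i _ => h i) ⟨j, Finset.mem_univ _, lt_of_le_of_ne (h j) hne⟩
  exact hlt.ne (fnext_bijective.sum_comp f)

lemma gadgetAdj.apply_le_of_ne {B k : ℕ} {i j : Fin k} {a b : Fin k → Fin B}
    (h : gadgetAdj B k i a b) (hj : j ≠ i) : b j ≤ a j := by
  obtain ⟨-, hdec, hfix⟩ := h
  by_cases hji : j = fnext i
  · exact hji ▸ hdec.le
  · exact (hfix j hj hji).ge

lemma gadgetAdj_cycle_fnext_mem_range {B k n : ℕ} {c : Fin n → Fin k → Fin B}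
    {col : Fin n → Fin k} (hcyc : ∀ j, gadgetAdj B k (col j) (c j) (c (fnext j)))
    {p : Fin k} (hp : p ∈ Set.range col) : fnext p ∈ Set.range col := by
  by_contra hmiss
  obtain ⟨j, rfl⟩ := hp
  have hconst : c (fnext j) (fnext (col j)) = c j (fnext (col j)) :=
    Fin.ext <| apply_fnext_eq_of_apply_fnext_le (f := fun j' => (c j' (fnext (col j)) : ℕ))
      (fun j' => (hcyc j').apply_le_of_ne fun h => hmiss ⟨j', h.symm⟩) j
  exact (hcyc j).2.1.ne hconst

theorem stmt_12_general (B k : ℕ) (n : ℕ) (hn : 0 < n)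
    (c : Fin n → (Fin k → Fin B))
    (col : Fin n → Fin k)
    (hcyc : ∀ j : Fin n, gadgetAdj B k (col j) (c j) (c (fnext j))) :
    ∀ i : Fin k, ∃ j : Fin n, col j = i := by
  have hrange : Set.range col = Set.univ :=
    eq_univ_of_fnext_mem (Set.mem_range_self ⟨0, hn⟩)
      fun _ => gadgetAdj_cycle_fnext_mem_range hcyc
  exact Set.range_eq_univ.mp hrange

theorem stmt_12 (B k : ℕ) (hB : 2 ≤ B) (hk : 2 ≤ k) (n : ℕ) (hn : 0 < n)
    (c : Fin n → (Fin k → Fin B)) (hinj : Function.Injective c)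
    (col : Fin n → Fin k)
    (hcyc : ∀ j : Fin n, gadgetAdj B k (col j) (c j) (c (fnext j))) :
    ∀ i : Fin k, ∃ j : Fin n, col j = i :=
  stmt_12_general B k n hn c col hcyc
end

section
/- The labeling gadget L on [B]^k (edges of color i strictly increase coordinate i, strictly decrease coordinate (i+1) mod k, fix other coordinates) has girth exactly k: it contains a directed cycle of length k, and contains no directed cycle of length less than k. -/
lemma fnext_eq {n : ℕ} [NeZero n] (j : Fin n) : fnext j = j + 1 := by
  apply Fin.ext
  rw [Fin.add_def, Fin.val_one']
  show (j.val + 1) % n = _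
  conv_lhs => rw [Nat.add_mod, Nat.mod_eq_of_lt j.isLt]

theorem stmt_13 (B k : ℕ) (hB : 2 ≤ B) (hk : 2 ≤ k) :
    (∃ c : Fin k → (Fin k → Fin B), Function.Injective c ∧
      ∀ j : Fin k, ∃ i : Fin k, gadgetAdj B k i (c j) (c (fnext j))) ∧
    (∀ n : ℕ, 0 < n → n < k → ∀ c : Fin n → (Fin k → Fin B),
      Function.Injective c →
      ¬ (∀ j : Fin n, ∃ i : Fin k, gadgetAdj B k i (c j) (c (fnext j)))) := by
  obtain ⟨k', rfl⟩ : ∃ k', k = k' + 2 := ⟨k - 2, by omega⟩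
  obtain ⟨B', rfl⟩ : ∃ B', B = B' + 2 := ⟨B - 2, by omega⟩
  have h01 : (0 : Fin (B' + 2)) < 1 := by simp [Fin.lt_def]
  constructor
  · refine ⟨fun j m => if m = -j then 1 else 0, ?_, ?_⟩
    · intro a b hab
      by_cases hab2 : a = b
      · exact hab2
      · exfalso
        have h := congrFun hab (-a)
        beta_reduce at h
        rw [if_pos rfl, if_neg (fun hc => hab2 (neg_inj.mp hc))] at h
        exact one_ne_zero h
    · intro j
      have hone : (1 : Fin (k' + 2)) ≠ 0 := one_ne_zero
      refine ⟨-(j + 1), ?_, ?_, ?_⟩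
      · rw [fnext_eq]
        beta_reduce
        have hne : -(j + 1) ≠ -j := fun h =>
          hone (add_eq_left.mp (neg_inj.mp h))
        rw [if_neg hne, if_pos rfl]
        exact h01
      · rw [fnext_eq, fnext_eq]
        beta_reduce
        have he : -(j + 1) + 1 = -j := by open Fin.CommRing in ring
        rw [he]
        have hne : -j ≠ -(j + 1) := fun h =>
          hone (add_eq_left.mp (neg_inj.mp h.symm))
        rw [if_neg hne, if_pos rfl]
        exact h01
      · intro m hm1 hm2
        rw [fnext_eq] at hm2 ⊢
        beta_reduce
        have he : -(j + 1) + 1 = -j := by open Fin.CommRing in ring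
        rw [he] at hm2
        rw [if_neg hm2, if_neg hm1]
  · intro n hn hnk c hcinj h
    haveI : NeZero n := ⟨hn.ne'⟩
    choose i hi using h
    set S : Finset (Fin (k' + 2)) := Finset.image i Finset.univ with hS
    have hsum : ∀ m : Fin (k' + 2),
        ∑ j : Fin n, (((c (fnext j) m).val : ℤ) - ((c j m).val : ℤ)) = 0 := by
      intro m
      rw [Finset.sum_sub_distrib]
      have he : ∑ j : Fin n, ((c (fnext j) m).val : ℤ)
          = ∑ j : Fin n, ((c j m).val : ℤ) := by
        have : ∀ j : Fin n, fnext j = (Equiv.addRight (1 : Fin n)) j := fun j => fnext_eq j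
        calc ∑ j : Fin n, ((c (fnext j) m).val : ℤ)
            = ∑ j : Fin n, ((c ((Equiv.addRight (1 : Fin n)) j) m).val : ℤ) := by
              refine Finset.sum_congr rfl fun j _ => by rw [this]
          _ = ∑ j : Fin n, ((c j m).val : ℤ) :=
              Equiv.sum_comp (Equiv.addRight (1 : Fin n)) (fun j => ((c j m).val : ℤ))
      rw [he, sub_self]
    have hclose : ∀ a ∈ S, fnext a ∈ S := by
      intro a ha
      by_contra hna
      obtain ⟨j0, _, hj0⟩ := Finset.mem_image.mp ha
      have hterm : ∀ j : Fin n,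
          ((c (fnext j) (fnext a)).val : ℤ) - ((c j (fnext a)).val : ℤ) ≤ 0 := by
        intro j
        obtain ⟨h1, h2, h3⟩ := hi j
        by_cases hcase : fnext (i j) = fnext a
        · rw [← hcase]
          rw [Fin.lt_def] at h2
          omega
        · have hne1 : fnext a ≠ i j := by
            intro hcontra
            exact hna (by rw [hcontra]; exact Finset.mem_image.mpr ⟨j, Finset.mem_univ _, rfl⟩)
          have := h3 (fnext a) hne1 (fun hc => hcase hc.symm)
          rw [this, sub_self]
      have hstrict :
          ((c (fnext j0) (fnext a)).val : ℤ) - ((c j0 (fnext a)).val : ℤ) < 0 := by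
        obtain ⟨h1, h2, h3⟩ := hi j0
        rw [hj0] at h2
        rw [Fin.lt_def] at h2
        omega
      have hlt : ∑ j : Fin n,
          (((c (fnext j) (fnext a)).val : ℤ) - ((c j (fnext a)).val : ℤ)) < 0 := by
        calc ∑ j : Fin n, (((c (fnext j) (fnext a)).val : ℤ) - ((c j (fnext a)).val : ℤ))
            < ∑ _j : Fin n, (0 : ℤ) :=
              Finset.sum_lt_sum (fun j _ => hterm j) ⟨j0, Finset.mem_univ _, hstrict⟩
          _ = 0 := by simp
      exact absurd (hsum (fnext a)) (by omega)
    set a0 : Fin (k' + 2) := i ⟨0, hn⟩ with ha0def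
    have ha0 : a0 ∈ S := Finset.mem_image.mpr ⟨⟨0, hn⟩, Finset.mem_univ _, rfl⟩
    open Fin.NatCast Fin.CommRing in
    have hall : ∀ d : ℕ, a0 + (d : Fin (k' + 2)) ∈ S := by
      intro d
      induction d with
      | zero => simpa using ha0
      | succ d ih =>
        have hmem := hclose _ ih
        rw [fnext_eq] at hmem
        have : a0 + ((d + 1 : ℕ) : Fin (k' + 2)) = a0 + (d : Fin (k' + 2)) + 1 := by
          push_cast
          ring
        rw [this]
        exact hmem
    have huniv : ∀ t : Fin (k' + 2), t ∈ S := by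
      intro t
      have := hall (t - a0).val
      rw [Fin.cast_val_eq_self] at this
      have he : a0 + (t - a0) = t := by ring
      rwa [he] at this
    have hcard1 : k' + 2 ≤ S.card := by
      have : (Finset.univ : Finset (Fin (k' + 2))) ⊆ S := fun x _ => huniv x
      calc k' + 2 = (Finset.univ : Finset (Fin (k' + 2))).card := by simp
        _ ≤ S.card := Finset.card_le_card this
    have hcard2 : S.card ≤ n := by
      calc S.card ≤ (Finset.univ : Finset (Fin n)).card := Finset.card_image_le
        _ = n := by simp
    omega
end

section
/- For every k ∈ ℕ and δ > 0, if B > k/δ then every subset S ⊆ [B]^k of size at least δ·B^k contains a directed cycle of length exactly k in the labeling gadget L such that (after cyclic shift) the i-th edge of the cycle has color i. -/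
/-!
A point of `S` that is not the lowest point of `S` on any of the `k` axis-parallel lines
through it has, for every `i`, a point `c i ∈ S` below it on the `i`-th line. These `k`
points form the rainbow cycle: `c i` and `c (i+1)` differ only in coordinates `i` and `i+1`,
where `c i` is lower in coordinate `i` and higher in coordinate `i+1`. The lowest points on
the lines parallel to axis `i` number at most `B^(k-1)`, one per line, so the `k` "surfaces"
together contain at most `k B^(k-1) < δ B^k` points and cannot exhaust `S`.
-/

lemma fnext_ne {k : ℕ} (hk : 2 ≤ k) (j : Fin k) : fnext j ≠ j := by
  simp only [fnext, Ne, Fin.ext_iff]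
  rcases Nat.lt_or_ge (j.val + 1) k with h | h
  · rw [Nat.mod_eq_of_lt h]; omega
  · rw [show j.val + 1 = k by omega, Nat.mod_self]; omega

section AxisMinimal

variable {ι α : Type*} [LinearOrder α]

def axisMinimal (S : Set (ι → α)) (i : ι) : Set (ι → α) :=
  {w | w ∈ S ∧ ∀ a ∈ S, (∀ j, j ≠ i → a j = w j) → w i ≤ a i}

lemma injOn_restrict_axisMinimal (S : Set (ι → α)) (i : ι) :
    Set.InjOn (fun w (j : {j // j ≠ i}) => w j) (axisMinimal S i) := by
  intro w ⟨hwS, hw⟩ w' ⟨hw'S, hw'⟩ hww'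
  have hoff : ∀ j, j ≠ i → w j = w' j := fun j hj => congrFun hww' ⟨j, hj⟩
  funext j
  by_cases hj : j = i
  · subst hj
    exact le_antisymm (hw w' hw'S fun m hm => (hoff m hm).symm) (hw' w hwS hoff)
  · exact hoff j hj

variable [Fintype ι] [Fintype α]

lemma ncard_axisMinimal_le (S : Set (ι → α)) (i : ι) :
    (axisMinimal S i).ncard ≤ Fintype.card α ^ (Fintype.card ι - 1) := by
  calc (axisMinimal S i).ncard
      ≤ (Set.univ : Set ({j // j ≠ i} → α)).ncard :=
        Set.ncard_le_ncard_of_injOn _ (fun _ _ => Set.mem_univ _)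
          (injOn_restrict_axisMinimal S i)
    _ = Fintype.card α ^ (Fintype.card ι - 1) := by
        classical simp [Nat.card_eq_fintype_card, Fintype.card_subtype_compl]

lemma exists_forall_notMem_axisMinimal (S : Set (ι → α))
    (hS : Fintype.card ι * Fintype.card α ^ (Fintype.card ι - 1) < S.ncard) :
    ∃ w ∈ S, ∀ i, w ∉ axisMinimal S i := by
  by_contra! h
  have hsub : S ⊆ ⋃ i, axisMinimal S i := fun w hw => Set.mem_iUnion.mpr (h w hw)
  have := calc S.ncard
      ≤ (⋃ i, axisMinimal S i).ncard := Set.ncard_le_ncard hsub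
    _ ≤ ∑ i, (axisMinimal S i).ncard := Set.ncard_iUnion_le_of_fintype _
    _ ≤ ∑ _i : ι, Fintype.card α ^ (Fintype.card ι - 1) :=
        Finset.sum_le_sum fun i _ => ncard_axisMinimal_le S i
    _ = Fintype.card ι * Fintype.card α ^ (Fintype.card ι - 1) := by simp
  omega

end AxisMinimal

lemma exists_rainbow_cycle_of_forall_notMem_axisMinimal {k B : ℕ} (hk : 2 ≤ k)
    {S : Set (Fin k → Fin B)} {w : Fin k → Fin B} (hw : ∀ i, w ∉ axisMinimal S i)
    (hwS : w ∈ S) :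
    ∃ c : Fin k → (Fin k → Fin B), Function.Injective c ∧
      (∀ j, c j ∈ S) ∧ ∀ j : Fin k, gadgetAdj B k j (c j) (c (fnext j)) := by
  have hbelow : ∀ i, ∃ a ∈ S, (∀ j, j ≠ i → a j = w j) ∧ a i < w i := by
    intro i
    by_contra! h
    exact hw i ⟨hwS, h⟩
  choose c hcS hcoff hclt using hbelow
  refine ⟨c, fun i i' hii' => ?_, hcS, fun j => ?_⟩
  · by_contra hne
    have := hclt i
    rw [hii', hcoff i' i hne] at this
    exact lt_irrefl _ this
  · have hne := fnext_ne hk j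
    refine ⟨?_, ?_, fun m hm hm' => ?_⟩
    · rw [hcoff (fnext j) j hne.symm]; exact hclt j
    · rw [hcoff j (fnext j) hne]; exact hclt (fnext j)
    · rw [hcoff j m hm, hcoff (fnext j) m hm']

lemma natCast_mul_pow_pred_lt {k B : ℕ} {δ : ℝ} (hδ : 0 < δ) (hB : (k : ℝ) / δ < B) :
    (k : ℝ) * (B : ℝ) ^ (k - 1) < δ * (B : ℝ) ^ k := by
  have hkB : (k : ℝ) < δ * B := by rwa [div_lt_iff₀ hδ, mul_comm] at hB
  have hB0 : (0 : ℝ) < B := pos_of_mul_pos_right ((Nat.cast_nonneg k).trans_lt hkB) hδ.le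
  rcases k with _ | k
  · simpa using hδ
  · calc ((k + 1 : ℕ) : ℝ) * (B : ℝ) ^ k < δ * B * (B : ℝ) ^ k := by gcongr
      _ = δ * (B : ℝ) ^ (k + 1) := by ring

theorem stmt_14 (k B : ℕ) (hk : 2 ≤ k) (δ : ℝ) (hδ : 0 < δ)
    (hB : (k : ℝ) / δ < B)
    (S : Set (Fin k → Fin B)) (hS : δ * (B : ℝ) ^ k ≤ S.ncard) :
    ∃ c : Fin k → (Fin k → Fin B), Function.Injective c ∧
      (∀ j, c j ∈ S) ∧ ∀ j : Fin k, gadgetAdj B k j (c j) (c (fnext j)) := by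
  have hcard : k * B ^ (k - 1) < S.ncard := by
    exact_mod_cast (natCast_mul_pow_pred_lt hδ hB).trans_le hS
  obtain ⟨w, hwS, hw⟩ := exists_forall_notMem_axisMinimal S (by simpa using hcard)
  exact exists_rainbow_cycle_of_forall_notMem_axisMinimal hk hw hwS
end
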